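/- arXiv:quant-ph/0611133 — 4 statements merged into one kernel-verified Lean document; each statement's English description precedes it below -/
import Mathlib

section
/- Let |Ψ⟩ and |Φ⟩ be unit vectors in a complex Hilbert space that are neither parallel nor orthogonal (0 < |⟨Ψ|Φ⟩| < 1). Then there do not exist positive semi-definite operators E_Ψ and E_Φ with E_Ψ + E_Φ ≤ 1 (as operators) such that ⟨Ψ|E_Ψ|Ψ⟩ = 1, ⟨Φ|E_Φ|Φ⟩ = 1, ⟨Ψ|E_Φ|Ψ⟩ = 0 and ⟨Φ|E_Ψ|Φ⟩ = 0. -/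
/-!
A positive operator with zero expectation in a state annihilates it, so `EΦ Ψ = 0` and
`EΨ Φ = 0`; and since `EΨ + EΦ ≤ 1` has expectation `1` in `Ψ`, `Ψ` is fixed by
`EΨ + EΦ`, hence by `EΨ`. Thus `Ψ` and `Φ` are eigenvectors of the Hermitian `EΨ` for the
eigenvalues `1` and `0`, so they are orthogonal.
-/

open Matrix ComplexOrder

namespace Matrix

variable {n : Type*} [Fintype n]

theorem IsHermitian.dotProduct_eq_zero_of_mulVec_eq_self_of_mulVec_eq_zero {α : Type*}
    [CommSemiring α] [StarRing α] {A : Matrix n n α} {v w : n → α}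
    (hA : A.IsHermitian) (hv : A *ᵥ v = v) (hw : A *ᵥ w = 0) : star v ⬝ᵥ w = 0 :=
  calc star v ⬝ᵥ w = star (A *ᵥ v) ⬝ᵥ w := by rw [hv]
    _ = star v ⬝ᵥ A *ᵥ w := by rw [star_mulVec, hA.eq, dotProduct_mulVec]
    _ = 0 := by rw [hw, dotProduct_zero]

theorem mulVec_eq_self_of_posSemidef_one_sub {𝕜 : Type*} [RCLike 𝕜] [DecidableEq n]
    {A : Matrix n n 𝕜} {v : n → 𝕜}
    (hA : (1 - A).PosSemidef) (hv : star v ⬝ᵥ A *ᵥ v = star v ⬝ᵥ v) : A *ᵥ v = v := by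
  have h : (1 - A) *ᵥ v = 0 :=
    (hA.dotProduct_mulVec_zero_iff v).mp <| by
      rw [sub_mulVec, one_mulVec, dotProduct_sub, hv, sub_self]
  rwa [sub_mulVec, one_mulVec, sub_eq_zero, eq_comm] at h

end Matrix

theorem no_perfect_discrimination_general {n : ℕ}
    {Ψ Φ : Fin n → ℂ}
    (hΨ : star Ψ ⬝ᵥ Ψ = 1)
    (hlow : 0 < ‖star Ψ ⬝ᵥ Φ‖) :
    ¬ ∃ EΨ EΦ : Matrix (Fin n) (Fin n) ℂ,
        EΨ.PosSemidef ∧ EΦ.PosSemidef ∧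
        ((1 : Matrix (Fin n) (Fin n) ℂ) - (EΨ + EΦ)).PosSemidef ∧
        star Ψ ⬝ᵥ EΨ.mulVec Ψ = 1 ∧
        star Φ ⬝ᵥ EΦ.mulVec Φ = 1 ∧
        star Ψ ⬝ᵥ EΦ.mulVec Ψ = 0 ∧
        star Φ ⬝ᵥ EΨ.mulVec Φ = 0 := by
  rintro ⟨EΨ, EΦ, hEΨ, hEΦ, hsum, hΨΨ, -, hΨΦ, hΦΨ⟩
  have hEΦΨ : EΦ *ᵥ Ψ = 0 := (hEΦ.dotProduct_mulVec_zero_iff Ψ).mp hΨΦ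
  have hEΨΦ : EΨ *ᵥ Φ = 0 := (hEΨ.dotProduct_mulVec_zero_iff Φ).mp hΦΨ
  have hEΨΨ : EΨ *ᵥ Ψ = Ψ := by
    have h := mulVec_eq_self_of_posSemidef_one_sub hsum
      (by rw [add_mulVec, dotProduct_add, hΨΨ, hΨΦ, hΨ, add_zero])
    rwa [add_mulVec, hEΦΨ, add_zero] at h
  have horth : star Ψ ⬝ᵥ Φ = 0 :=
    hEΨ.isHermitian.dotProduct_eq_zero_of_mulVec_eq_self_of_mulVec_eq_zero hEΨΨ hEΨΦ
  simp [horth] at hlow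

/-- Two non-orthogonal, non-parallel unit vectors cannot be perfectly
unambiguously discriminated: there is no pair of positive semi-definite
operators `EΨ`, `EΦ` with `EΨ + EΦ ≤ 1` identifying each state with
certainty and without error. -/
theorem no_perfect_discrimination {n : ℕ}
    {Ψ Φ : Fin n → ℂ}
    (hΨ : star Ψ ⬝ᵥ Ψ = 1) (hΦ : star Φ ⬝ᵥ Φ = 1)
    (hlow : 0 < ‖star Ψ ⬝ᵥ Φ‖)
    (hhigh : ‖star Ψ ⬝ᵥ Φ‖ < 1) :
    ¬ ∃ EΨ EΦ : Matrix (Fin n) (Fin n) ℂ,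
        EΨ.PosSemidef ∧ EΦ.PosSemidef ∧
        ((1 : Matrix (Fin n) (Fin n) ℂ) - (EΨ + EΦ)).PosSemidef ∧
        star Ψ ⬝ᵥ EΨ.mulVec Ψ = 1 ∧
        star Φ ⬝ᵥ EΦ.mulVec Φ = 1 ∧
        star Ψ ⬝ᵥ EΦ.mulVec Ψ = 0 ∧
        star Φ ⬝ᵥ EΨ.mulVec Φ = 0 :=
  no_perfect_discrimination_general hΨ hlow
end

section
/- Let ρ_0 and ρ_1 be positive semi-definite operators on a finite-dimensional Hilbert space H whose ranges satisfy range(ρ_0) ∩ range(ρ_1) = {0} and range(ρ_0) + range(ρ_1) = H. Let Σ = ρ_0 + ρ_1, which is invertible. Then ρ_0 Σ^{-1} ρ_1 = 0 and ρ_i Σ^{-1} ρ_i = ρ_i for i = 0, 1. -/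
open Matrix ComplexOrder

/-!
A vector killed by `Σ = ρ₀ + ρ₁` is killed by both (positive) summands, hence is
orthogonal to `range ρ₀ + range ρ₁ = H`; so `Σ` is invertible. Writing `ρ₀ = Σ - ρ₁` gives
`ρ₀ Σ⁻¹ ρ₁ = ρ₁ - ρ₁ Σ⁻¹ ρ₁`, so the range of `ρ₀ Σ⁻¹ ρ₁` lies in
`range ρ₀ ∩ range ρ₁ = 0`. The identities `ρᵢ Σ⁻¹ ρᵢ = ρᵢ` then follow by expanding
`Σ⁻¹ Σ = Σ Σ⁻¹ = 1`.
-/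

namespace Matrix

section CommRing

variable {m R : Type*} [Fintype m] [CommRing R]

theorem range_mulVecLin_mul_le {l n : Type*} [Fintype n] (A : Matrix l m R)
    (B : Matrix m n R) :
    LinearMap.range (A * B).mulVecLin ≤ LinearMap.range A.mulVecLin := by
  rw [mulVecLin_mul]
  exact LinearMap.range_comp_le_range _ _

theorem eq_zero_of_range_mulVecLin_eq_bot {n : Type*} {A : Matrix n m R}
    (h : LinearMap.range A.mulVecLin = ⊥) : A = 0 := by
  classical
  exact toLin'.injective <| by rw [toLin'_apply', LinearMap.range_eq_bot.mp h, map_zero]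

variable [DecidableEq m] {A B : Matrix m m R}

theorem mul_inv_add_mul_eq_zero (hAB : IsUnit (A + B))
    (hAB' : LinearMap.range A.mulVecLin ⊓ LinearMap.range B.mulVecLin = ⊥) :
    A * (A + B)⁻¹ * B = 0 := by
  have hdet := (isUnit_iff_isUnit_det _).mp hAB
  have hright : A * (A + B)⁻¹ * B = B * (1 - (A + B)⁻¹ * B) := by
    calc A * (A + B)⁻¹ * B = ((A + B) - B) * ((A + B)⁻¹ * B) := by
          rw [add_sub_cancel_right, Matrix.mul_assoc]
      _ = B * (1 - (A + B)⁻¹ * B) := by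
          rw [sub_mul, mul_nonsing_inv_cancel_left _ _ hdet, mul_sub, Matrix.mul_one]
  refine eq_zero_of_range_mulVecLin_eq_bot (eq_bot_iff.mpr ?_)
  rw [← hAB']
  exact le_inf (range_mulVecLin_mul_le _ _ |>.trans (range_mulVecLin_mul_le _ _))
    (hright ▸ range_mulVecLin_mul_le _ _)

theorem mul_inv_add_mul_self_left (hAB : IsUnit (A + B))
    (hAB' : LinearMap.range A.mulVecLin ⊓ LinearMap.range B.mulVecLin = ⊥) :
    A * (A + B)⁻¹ * A = A := by
  calc A * (A + B)⁻¹ * A = A * (A + B)⁻¹ * ((A + B) - B) := by rw [add_sub_cancel_right]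
    _ = A * ((A + B)⁻¹ * (A + B)) - A * (A + B)⁻¹ * B := by
        rw [Matrix.mul_sub, Matrix.mul_assoc]
    _ = A := by
        rw [nonsing_inv_mul _ ((isUnit_iff_isUnit_det _).mp hAB), Matrix.mul_one,
          mul_inv_add_mul_eq_zero hAB hAB', sub_zero]

theorem mul_inv_add_mul_self_right (hAB : IsUnit (A + B))
    (hAB' : LinearMap.range A.mulVecLin ⊓ LinearMap.range B.mulVecLin = ⊥) :
    B * (A + B)⁻¹ * B = B := by
  calc B * (A + B)⁻¹ * B = (A + B) * (A + B)⁻¹ * B - A * (A + B)⁻¹ * B := by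
        rw [Matrix.add_mul, Matrix.add_mul, add_sub_cancel_left]
    _ = B := by
        rw [mul_nonsing_inv _ ((isUnit_iff_isUnit_det _).mp hAB), Matrix.one_mul,
          mul_inv_add_mul_eq_zero hAB hAB', sub_zero]

end CommRing

section RCLike

variable {m 𝕜 : Type*} [Fintype m] [RCLike 𝕜] {A B : Matrix m m 𝕜}

theorem IsHermitian.star_dotProduct_eq_zero_of_mem_range (hA : A.IsHermitian) {x : m → 𝕜}
    (hx : A *ᵥ x = 0) {y : m → 𝕜} (hy : y ∈ LinearMap.range A.mulVecLin) :
    star x ⬝ᵥ y = 0 := by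
  obtain ⟨z, rfl⟩ := hy
  rw [mulVecLin_apply, dotProduct_mulVec, ← hA.eq, ← star_mulVec, hx, star_zero,
    zero_dotProduct]

theorem PosSemidef.mulVec_eq_zero_of_add_mulVec_eq_zero (hA : A.PosSemidef) (hB : B.PosSemidef)
    {x : m → 𝕜} (hx : (A + B) *ᵥ x = 0) : A *ᵥ x = 0 ∧ B *ᵥ x = 0 := by
  have hsum : star x ⬝ᵥ A *ᵥ x + star x ⬝ᵥ B *ᵥ x = 0 := by
    rw [← dotProduct_add, ← add_mulVec, hx, dotProduct_zero]
  obtain ⟨hAx, hBx⟩ := (add_eq_zero_iff_of_nonneg (hA.dotProduct_mulVec_nonneg x)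
    (hB.dotProduct_mulVec_nonneg x)).mp hsum
  exact ⟨(hA.dotProduct_mulVec_zero_iff x).mp hAx, (hB.dotProduct_mulVec_zero_iff x).mp hBx⟩

theorem PosSemidef.isUnit_add_of_sup_range_eq_top [DecidableEq m] (hA : A.PosSemidef)
    (hB : B.PosSemidef) (hAB : LinearMap.range A.mulVecLin ⊔ LinearMap.range B.mulVecLin = ⊤) :
    IsUnit (A + B) := by
  refine mulVec_injective_iff_isUnit.mp ?_
  rw [← coe_mulVecLin, ← LinearMap.ker_eq_bot, ker_mulVecLin_eq_bot_iff]
  intro x hx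
  obtain ⟨hAx, hBx⟩ := hA.mulVec_eq_zero_of_add_mulVec_eq_zero hB hx
  have horth : ∀ y, star x ⬝ᵥ y = 0 := by
    intro y
    obtain ⟨a, ha, b, hb, rfl⟩ := Submodule.mem_sup.mp (hAB ▸ Submodule.mem_top : y ∈ _)
    rw [dotProduct_add, hA.1.star_dotProduct_eq_zero_of_mem_range hAx ha,
      hB.1.star_dotProduct_eq_zero_of_mem_range hBx hb, add_zero]
  exact dotProduct_star_self_eq_zero.mp (horth x)

end RCLike

end Matrix

/-- If the ranges of positive semi-definite `ρ₀`, `ρ₁` intersect trivially and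
together span the whole space, then `Σ = ρ₀ + ρ₁` is invertible,
`ρ₀ Σ⁻¹ ρ₁ = 0` and `ρᵢ Σ⁻¹ ρᵢ = ρᵢ`. -/
theorem parallel_addition_zero {n : ℕ}
    {ρ₀ ρ₁ : Matrix (Fin n) (Fin n) ℂ}
    (h₀ : ρ₀.PosSemidef) (h₁ : ρ₁.PosSemidef)
    (hinf : LinearMap.range ρ₀.mulVecLin ⊓ LinearMap.range ρ₁.mulVecLin = ⊥)
    (hsup : LinearMap.range ρ₀.mulVecLin ⊔ LinearMap.range ρ₁.mulVecLin = ⊤) :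
    IsUnit (ρ₀ + ρ₁) ∧
    ρ₀ * (ρ₀ + ρ₁)⁻¹ * ρ₁ = 0 ∧
    ρ₀ * (ρ₀ + ρ₁)⁻¹ * ρ₀ = ρ₀ ∧
    ρ₁ * (ρ₀ + ρ₁)⁻¹ * ρ₁ = ρ₁ := by
  have hunit := h₀.isUnit_add_of_sup_range_eq_top h₁ hsup
  exact ⟨hunit, mul_inv_add_mul_eq_zero hunit hinf, mul_inv_add_mul_self_left hunit hinf,
    mul_inv_add_mul_self_right hunit hinf⟩
end

section
/- Let ρ_0, ρ_1 be density matrices with Tr(E_1 ρ_0) = 0 for a USD POVM {E_0, E_1, E_?}, with non-identical supports. Writing P_1 for the orthogonal projection onto the range of ρ_1, the partial failure probability Q_0 = η_0 Tr(E_? ρ_0) satisfies Q_0 ≥ η_0 Tr(P_1 ρ_0). -/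
/-!
Positivity turns `Tr(E₀ ρ₁) = 0` into `E₀ ρ₁ = 0`, so `E₀` kills the range of `ρ₁` and hence
`E₀ P₁ = 0`. Compressing `E₁ + E? = 1 - E₀ ≥ 0` by `1 - P₁` gives `1 - P₁ - E₀ ≥ 0`, that is
`P₁ ≤ E₁ + E?`; pairing with `ρ₀`, on which `E₁` has zero trace, yields the bound.
-/

open Matrix ComplexOrder

open scoped MatrixOrder

theorem IsStarProjection.le_one_sub_of_mul_eq_zero {R : Type*} [Ring R] [StarRing R]
    [PartialOrder R] [StarOrderedRing R] {p e : R} (hp : IsStarProjection p) (he : e ≤ 1)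
    (hep : e * p = 0) : p ≤ 1 - e := by
  have he' : IsSelfAdjoint e := by
    simpa using (IsSelfAdjoint.of_nonneg (sub_nonneg.mpr he)).neg.add (IsSelfAdjoint.one R)
  have hpe : p * e = 0 := by
    simpa [he'.star_eq, hp.isSelfAdjoint.star_eq] using congrArg star hep
  have compress : 1 - e - p = star (1 - p) * (1 - e) * (1 - p) := by
    rw [hp.one_sub.isSelfAdjoint.star_eq]
    simp only [mul_sub, sub_mul, one_mul, mul_one, hp.isIdempotentElem.eq, hep, hpe, zero_mul]
    abel
  rw [← sub_nonneg, compress]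
  exact star_left_conjugate_nonneg (sub_nonneg.mpr he) _

theorem Matrix.mul_eq_zero_of_range_le {m n R : Type*} [Fintype m] [Fintype n] [CommRing R]
    {A : Matrix m n R} {B C : Matrix n n R} (hAB : A * B = 0)
    (hCB : LinearMap.range C.mulVecLin ≤ LinearMap.range B.mulVecLin) : A * C = 0 := by
  classical
  refine Matrix.toLin'.injective ?_
  rw [map_zero, toLin'_apply', mulVecLin_mul, ← LinearMap.range_le_ker_iff]
  refine hCB.trans (LinearMap.range_le_ker_iff.mpr ?_)
  rw [← mulVecLin_mul, hAB, mulVecLin_zero]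

namespace Matrix

variable {n 𝕜 : Type*} [Fintype n] [RCLike 𝕜] {A B ρ : Matrix n n 𝕜}

theorem PosSemidef.trace_mul_nonneg (hA : A.PosSemidef) (hB : B.PosSemidef) :
    0 ≤ (A * B).trace := by
  classical
  obtain ⟨X, rfl⟩ := CStarAlgebra.nonneg_iff_eq_star_mul_self.mp hB.nonneg
  rw [star_eq_conjTranspose, ← Matrix.mul_assoc, trace_mul_comm, ← Matrix.mul_assoc]
  exact (hA.mul_mul_conjTranspose_same X).trace_nonneg

theorem trace_mul_le_trace_mul_of_le (hAB : A ≤ B) (hρ : ρ.PosSemidef) :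
    (A * ρ).trace ≤ (B * ρ).trace := by
  rw [← sub_nonneg, ← trace_sub, ← Matrix.sub_mul]
  exact PosSemidef.trace_mul_nonneg hAB hρ

theorem PosSemidef.mul_eq_zero_of_trace_mul_eq_zero (hA : A.PosSemidef) (hB : B.PosSemidef)
    (h : (A * B).trace = 0) : A * B = 0 := by
  classical
  obtain ⟨X, rfl⟩ := CStarAlgebra.nonneg_iff_eq_star_mul_self.mp hA.nonneg
  obtain ⟨Y, rfl⟩ := CStarAlgebra.nonneg_iff_eq_star_mul_self.mp hB.nonneg
  simp only [star_eq_conjTranspose] at h ⊢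
  have hXY : X * Yᴴ = 0 := by
    rw [← trace_mul_conjTranspose_self_eq_zero_iff, ← h, conjTranspose_mul,
      conjTranspose_conjTranspose, ← Matrix.mul_assoc, trace_mul_comm, ← Matrix.mul_assoc,
      ← Matrix.mul_assoc, Matrix.mul_assoc]
  rw [Matrix.mul_assoc, ← Matrix.mul_assoc X, hXY, Matrix.zero_mul, Matrix.mul_zero]

end Matrix

theorem partial_failure_ge_proj_trace_general {n : ℕ}
    {ρ₀ ρ₁ E₀ E₁ Eq P₁ : Matrix (Fin n) (Fin n) ℂ}
    (h₀ : ρ₀.PosSemidef) (h₁ : ρ₁.PosSemidef)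
    (hE₀ : E₀.PosSemidef) (hE₁ : E₁.PosSemidef) (hEq : Eq.PosSemidef)
    (hsum : E₀ + E₁ + Eq = 1)
    (hU₀ : (E₀ * ρ₁).trace = 0) (hU₁ : (E₁ * ρ₀).trace = 0)
    (hP₁proj : P₁ * P₁ = P₁) (hP₁herm : P₁ᴴ = P₁)
    (hP₁range : LinearMap.range P₁.mulVecLin = LinearMap.range ρ₁.mulVecLin)
    {η₀ : ℝ} (hη₀ : 0 < η₀) :
    η₀ * ((P₁ * ρ₀).trace).re ≤ η₀ * ((Eq * ρ₀).trace).re := by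
  have hE₀P₁ : E₀ * P₁ = 0 :=
    mul_eq_zero_of_range_le (hE₀.mul_eq_zero_of_trace_mul_eq_zero h₁ hU₀) hP₁range.le
  have hE₀_le : E₀ ≤ 1 := by
    rw [le_iff, ← hsum, add_assoc, add_sub_cancel_left]
    exact hE₁.add hEq
  have hP₁_le : P₁ ≤ 1 - E₀ :=
    IsStarProjection.le_one_sub_of_mul_eq_zero ⟨hP₁proj, hP₁herm⟩ hE₀_le hE₀P₁
  have htrace : (P₁ * ρ₀).trace ≤ (Eq * ρ₀).trace :=
    calc (P₁ * ρ₀).trace ≤ ((1 - E₀) * ρ₀).trace := trace_mul_le_trace_mul_of_le hP₁_le h₀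
      _ = ((E₁ + Eq) * ρ₀).trace := by rw [← hsum, add_assoc, add_sub_cancel_left]
      _ = (Eq * ρ₀).trace := by rw [Matrix.add_mul, trace_add, hU₁, zero_add]
  exact mul_le_mul_of_nonneg_left (Complex.le_def.mp htrace).1 hη₀.le

/-- For a USD POVM `{E₀, E₁, E?}` on density matrices `ρ₀`, `ρ₁` with
non-identical supports, writing `P₁` for the orthogonal projection onto the
range of `ρ₁`, the partial failure probability satisfies
`η₀ Tr(E? ρ₀) ≥ η₀ Tr(P₁ ρ₀)`. -/
theorem partial_failure_ge_proj_trace {n : ℕ}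
    {ρ₀ ρ₁ E₀ E₁ Eq P₁ : Matrix (Fin n) (Fin n) ℂ}
    (h₀ : ρ₀.PosSemidef) (h₁ : ρ₁.PosSemidef)
    (ht₀ : ρ₀.trace = 1) (ht₁ : ρ₁.trace = 1)
    (hE₀ : E₀.PosSemidef) (hE₁ : E₁.PosSemidef) (hEq : Eq.PosSemidef)
    (hsum : E₀ + E₁ + Eq = 1)
    (hU₀ : (E₀ * ρ₁).trace = 0) (hU₁ : (E₁ * ρ₀).trace = 0)
    (hsupp : LinearMap.range ρ₀.mulVecLin ≠ LinearMap.range ρ₁.mulVecLin)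
    (hP₁proj : P₁ * P₁ = P₁) (hP₁herm : P₁ᴴ = P₁)
    (hP₁range : LinearMap.range P₁.mulVecLin = LinearMap.range ρ₁.mulVecLin)
    {η₀ : ℝ} (hη₀ : 0 < η₀) :
    η₀ * ((P₁ * ρ₀).trace).re ≤ η₀ * ((Eq * ρ₀).trace).re :=
  partial_failure_ge_proj_trace_general h₀ h₁ hE₀ hE₁ hEq hsum hU₀ hU₁ hP₁proj hP₁herm hP₁range hη₀
end

section
/- Let {E_0, E_1, E_?} be positive semi-definite operators on a finite-dimensional Hilbert space with E_0 + E_1 + E_? = 1, where E_0 = x|x⟩⟨x| and E_1 = y|y⟩⟨y| are rank-one with x, y > 0 and unit vectors |x⟩, |y⟩, and suppose rank(E_?) ≤ dim H − 2. Then x = y = 1, ⟨x|y⟩ = 0, and E_? is the orthogonal projection onto the orthogonal complement of span{|x⟩, |y⟩}. -/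
open Matrix ComplexOrder

/-!
Write `E? = 1 - x|x⟩⟨x| - y|y⟩⟨y|`. A vector killed by `E?` lies in `span {|x⟩, |y⟩}`, and the
rank bound makes this kernel at least two-dimensional, so the kernel is the whole span and
`|x⟩, |y⟩` are linearly independent. Applying `E?` to `|x⟩` and `|y⟩` and comparing coefficients
gives `x ⟨x|x⟩ = 1`, `y ⟨y|x⟩ = 0` and symmetrically, hence `x = y = 1`, `⟨x|y⟩ = 0`, and
`E? = 1 - |x⟩⟨x| - |y⟩⟨y|` is the projection onto the common kernel of `⟨x|` and `⟨y|`.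
-/

namespace Matrix

section CommRing

variable {R ι : Type*} [CommRing R] [Fintype ι] [DecidableEq ι] {u v p q : ι → R}

theorem one_sub_vecMulVec_sub_vecMulVec_mulVec (w : ι → R) :
    (1 - vecMulVec u p - vecMulVec v q) *ᵥ w = w - (p ⬝ᵥ w) • u - (q ⬝ᵥ w) • v := by
  simp [sub_mulVec, vecMulVec_mulVec]

theorem one_sub_vecMulVec_sub_vecMulVec_mulVec_eq_zero_iff {w : ι → R} :
    (1 - vecMulVec u p - vecMulVec v q) *ᵥ w = 0 ↔ (p ⬝ᵥ w) • u + (q ⬝ᵥ w) • v = w := by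
  rw [one_sub_vecMulVec_sub_vecMulVec_mulVec, sub_sub, sub_eq_zero, eq_comm]

theorem ker_one_sub_vecMulVec_sub_vecMulVec_le_span :
    LinearMap.ker (1 - vecMulVec u p - vecMulVec v q).mulVecLin ≤
      Submodule.span R (Set.range ![u, v]) := by
  intro w hw
  rw [range_cons_cons_empty, Submodule.mem_span_pair]
  exact ⟨_, _, one_sub_vecMulVec_sub_vecMulVec_mulVec_eq_zero_iff.1 hw⟩

theorem one_sub_vecMulVec_sub_vecMulVec_mul_self
    (hpu : p ⬝ᵥ u = 1) (hqu : q ⬝ᵥ u = 0) (hpv : p ⬝ᵥ v = 0) (hqv : q ⬝ᵥ v = 1) :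
    (1 - vecMulVec u p - vecMulVec v q) * (1 - vecMulVec u p - vecMulVec v q) =
      1 - vecMulVec u p - vecMulVec v q := by
  simp only [sub_mul, mul_sub, one_mul, mul_one, vecMulVec_mul_vecMulVec, hpu, hqu, hpv, hqv,
    one_smul, zero_smul, vecMulVec_zero]
  abel

theorem range_one_sub_vecMulVec_sub_vecMulVec
    (hpu : p ⬝ᵥ u = 1) (hqu : q ⬝ᵥ u = 0) (hpv : p ⬝ᵥ v = 0) (hqv : q ⬝ᵥ v = 1) :
    (LinearMap.range (1 - vecMulVec u p - vecMulVec v q).mulVecLin : Set (ι → R)) =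
      {w | p ⬝ᵥ w = 0 ∧ q ⬝ᵥ w = 0} := by
  ext w
  simp only [SetLike.mem_coe, LinearMap.mem_range, mulVecLin_apply, Set.mem_ofPred_eq]
  constructor
  · rintro ⟨w, rfl⟩
    simp [one_sub_vecMulVec_sub_vecMulVec_mulVec, dotProduct_sub, hpu, hqu, hpv, hqv]
  · rintro ⟨hp, hq⟩
    exact ⟨w, by simp [one_sub_vecMulVec_sub_vecMulVec_mulVec, hp, hq]⟩

end CommRing

section Field

variable {K ι : Type*} [Field K] [Fintype ι] [DecidableEq ι] {u v p q : ι → K}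

theorem ker_one_sub_vecMulVec_sub_vecMulVec_eq_span
    (h : 2 ≤ Module.finrank K (LinearMap.ker (1 - vecMulVec u p - vecMulVec v q).mulVecLin)) :
    LinearMap.ker (1 - vecMulVec u p - vecMulVec v q).mulVecLin =
      Submodule.span K (Set.range ![u, v]) :=
  Submodule.eq_of_le_of_finrank_le ker_one_sub_vecMulVec_sub_vecMulVec_le_span
    ((finrank_range_le_card _).trans (by simpa using h))

theorem linearIndependent_pair_of_two_le_finrank_ker
    (h : 2 ≤ Module.finrank K (LinearMap.ker (1 - vecMulVec u p - vecMulVec v q).mulVecLin)) :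
    LinearIndependent K ![u, v] := by
  rw [linearIndependent_iff_card_le_finrank_span, Set.finrank,
    ← ker_one_sub_vecMulVec_sub_vecMulVec_eq_span h]
  simpa using h

theorem dotProduct_eq_of_two_le_finrank_ker
    (h : 2 ≤ Module.finrank K (LinearMap.ker (1 - vecMulVec u p - vecMulVec v q).mulVecLin)) :
    p ⬝ᵥ u = 1 ∧ q ⬝ᵥ u = 0 ∧ p ⬝ᵥ v = 0 ∧ q ⬝ᵥ v = 1 := by
  have hind := linearIndependent_pair_of_two_le_finrank_ker h
  have hmem : ∀ w ∈ Set.range ![u, v], (p ⬝ᵥ w) • u + (q ⬝ᵥ w) • v = w := fun w hw ↦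
    one_sub_vecMulVec_sub_vecMulVec_mulVec_eq_zero_iff.1 <|
      (ker_one_sub_vecMulVec_sub_vecMulVec_eq_span h).ge (Submodule.subset_span hw)
  obtain ⟨hpu, hqu⟩ := hind.eq_of_pair (s' := 1) (t' := 0) (by simpa using hmem u ⟨0, rfl⟩)
  obtain ⟨hpv, hqv⟩ := hind.eq_of_pair (s' := 0) (t' := 1) (by simpa using hmem v ⟨1, rfl⟩)
  exact ⟨hpu, hqu, hpv, hqv⟩

end Field

end Matrix

theorem povm_rank_one_forces_projective_general {n : ℕ} (hn : 2 ≤ n)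
    {E₀ E₁ Eq : Matrix (Fin n) (Fin n) ℂ}
    {x y : ℝ}
    {xv yv : Fin n → ℂ}
    (hxv : star xv ⬝ᵥ xv = 1) (hyv : star yv ⬝ᵥ yv = 1)
    (hE₀ : E₀ = (x : ℂ) • vecMulVec xv (star xv))
    (hE₁ : E₁ = (y : ℂ) • vecMulVec yv (star yv))
    (hsum : E₀ + E₁ + Eq = 1)
    (hrank : Eq.rank ≤ n - 2) :
    x = 1 ∧ y = 1 ∧ star xv ⬝ᵥ yv = 0 ∧
    Eq * Eq = Eq ∧ Eqᴴ = Eq ∧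
    (LinearMap.range Eq.mulVecLin : Set (Fin n → ℂ)) =
      {v : Fin n → ℂ | star xv ⬝ᵥ v = 0 ∧ star yv ⬝ᵥ v = 0} := by
  have hEq : Eq = 1 - vecMulVec xv ((x : ℂ) • star xv) - vecMulVec yv ((y : ℂ) • star yv) := by
    rw [← hsum, hE₀, hE₁, vecMulVec_smul, vecMulVec_smul]
    abel
  have hker : 2 ≤ Module.finrank ℂ (LinearMap.ker Eq.mulVecLin) := by
    have hdim := LinearMap.finrank_range_add_finrank_ker Eq.mulVecLin
    rw [Module.finrank_fin_fun] at hdim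
    unfold Matrix.rank at hrank
    omega
  obtain ⟨hx, hyx, hxy, hy⟩ := dotProduct_eq_of_two_le_finrank_ker (hEq ▸ hker)
  simp only [smul_dotProduct, hxv, hyv, smul_eq_mul, mul_one] at hx hyx hxy hy
  rw [hy, one_mul] at hyx
  rw [hx, one_mul] at hxy
  rw [hx, hy, one_smul, one_smul] at hEq
  subst hEq
  refine ⟨mod_cast hx, mod_cast hy, hxy, one_sub_vecMulVec_sub_vecMulVec_mul_self hxv hyx hxy hyv,
    by simp, range_one_sub_vecMulVec_sub_vecMulVec hxv hyx hxy hyv⟩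

/-- If `{E₀, E₁, E?}` is a POVM with `E₀ = x|x⟩⟨x|`, `E₁ = y|y⟩⟨y|` rank one
(`x, y > 0`, unit vectors) and `rank E? ≤ dim H - 2`, then `x = y = 1`,
`⟨x|y⟩ = 0`, and `E?` is the orthogonal projection onto the orthogonal
complement of `span {|x⟩, |y⟩}`. -/
theorem povm_rank_one_forces_projective {n : ℕ} (hn : 2 ≤ n)
    {E₀ E₁ Eq : Matrix (Fin n) (Fin n) ℂ}
    {x y : ℝ} (hx : 0 < x) (hy : 0 < y)
    {xv yv : Fin n → ℂ}
    (hxv : star xv ⬝ᵥ xv = 1) (hyv : star yv ⬝ᵥ yv = 1)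
    (hE₀ : E₀ = (x : ℂ) • vecMulVec xv (star xv))
    (hE₁ : E₁ = (y : ℂ) • vecMulVec yv (star yv))
    (hEq : Eq.PosSemidef)
    (hsum : E₀ + E₁ + Eq = 1)
    (hrank : Eq.rank ≤ n - 2) :
    x = 1 ∧ y = 1 ∧ star xv ⬝ᵥ yv = 0 ∧
    Eq * Eq = Eq ∧ Eqᴴ = Eq ∧
    (LinearMap.range Eq.mulVecLin : Set (Fin n → ℂ)) =
      {v : Fin n → ℂ | star xv ⬝ᵥ v = 0 ∧ star yv ⬝ᵥ v = 0} :=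
  povm_rank_one_forces_projective_general hn hxv hyv hE₀ hE₁ hsum hrank
end
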